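/- arXiv:1901.05754 — 2 statements merged into one kernel-verified Lean document; each statement's English description precedes it below -/
import Mathlib

section
/- Let I be a type, L ⊆ I a subset, S a type, m : ↥L → S, and let D := S ⊕ ↥(Lᶜ) with s : S → D the left injection and d : I → D defined by d x = s (m ⟨x, h⟩) when h : x ∈ L and d x = Sum.inr ⟨x, h⟩ otherwise. Let I' ⊆ I and S' ⊆ S satisfy: for every x ∈ L, m x ∈ S' if and only if x ∈ I'. Set L' := L ∩ I' and D' := s '' S' ∪ d '' I'. Then the restricted square — the inclusion ↥L' ↪ ↥I', the restriction m' : ↥L' → ↥S' of m (well-defined by the compatibility condition), the restriction d' : ↥I' → ↥D' of d, and the restriction s' : ↥S' → ↥D' of s — commutes and is a pushout in the category of types. -/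
open Classical in
/-- The map `d : I → S ⊕ ↥(Lᶜ)` of the paper's special pushout construction
`D := S + (I \ L)`, `d := m + id`. -/
noncomputable def dMap {I S : Type*} (L : Set I) (m : L → S) : I → S ⊕ ↥(Lᶜ) :=
  fun x => if h : x ∈ L then Sum.inl (m ⟨x, h⟩) else Sum.inr ⟨x, h⟩

theorem dMap_pos {I S : Type*} (L : Set I) (m : L → S) {x : I} (h : x ∈ L) :
    dMap L m x = Sum.inl (m ⟨x, h⟩) := by simp [dMap, h]

theorem dMap_neg {I S : Type*} (L : Set I) (m : L → S) {x : I} (h : x ∉ L) :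
    dMap L m x = Sum.inr ⟨x, h⟩ := by simp [dMap, h]

/-- Restricting the base pushout `D := S + (I \ L)` to a chain level
(`L' := L ∩ I'`, `S'`, `D' := s''S' ∪ d''I'`) again yields a commuting square
which is a pushout in the category of types. -/
theorem stmt2 {I S : Type*} (L : Set I) (m : L → S) (I' : Set I) (S' : Set S)
    (hcomp : ∀ x : L, m x ∈ S' ↔ (x : I) ∈ I') :
    let L' : Set I := L ∩ I'
    let D' : Set (S ⊕ ↥(Lᶜ)) := Sum.inl '' S' ∪ dMap L m '' I'
    let incl : L' → ↥I' := fun x => ⟨x.1, x.2.2⟩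
    let m' : L' → ↥S' := fun x => ⟨m ⟨x.1, x.2.1⟩, (hcomp ⟨x.1, x.2.1⟩).mpr x.2.2⟩
    let s' : ↥S' → ↥D' := fun y => ⟨Sum.inl y.1, Set.mem_union_left _ ⟨y.1, y.2, rfl⟩⟩
    let d' : ↥I' → ↥D' := fun x => ⟨dMap L m x.1, Set.mem_union_right _ ⟨x.1, x.2, rfl⟩⟩
    (d' ∘ incl = s' ∘ m') ∧
    (∀ (X : Type*) (g : ↥S' → X) (h : ↥I' → X),
      h ∘ incl = g ∘ m' →
      ∃! u : ↥D' → X, u ∘ s' = g ∧ u ∘ d' = h) := by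
  intro L' D' incl m' s' d'
  have mem1 : ∀ a : S, Sum.inl a ∈ D' → a ∈ S' := by
    rintro a (⟨b, hb, heq⟩ | ⟨x, hx, heq⟩)
    · cases heq; exact hb
    · by_cases hxL : x ∈ L
      · rw [dMap_pos L m hxL] at heq
        cases heq
        exact (hcomp ⟨x, hxL⟩).mpr hx
      · rw [dMap_neg L m hxL] at heq; cases heq
  have mem2 : ∀ z : ↥(Lᶜ), Sum.inr z ∈ D' → z.1 ∈ I' := by
    rintro z (⟨b, hb, heq⟩ | ⟨x, hx, heq⟩)
    · cases heq
    · by_cases hxL : x ∈ L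
      · rw [dMap_pos L m hxL] at heq; cases heq
      · rw [dMap_neg L m hxL] at heq
        cases heq
        exact hx
  constructor
  · funext x
    have hx : (x : I) ∈ L := x.2.1
    simp only [Function.comp_apply, d', s', incl, m']
    exact Subtype.ext (dMap_pos L m hx)
  · intro X g h hgh
    -- the mediating map
    set u : ↥D' → X := fun w =>
      Sum.rec (motive := fun t => t ∈ D' → X)
        (fun a ha => g ⟨a, mem1 a ha⟩)
        (fun z hz => h ⟨z.1, mem2 z hz⟩) w.1 w.2 with hu
    have key : ∀ (w : S ⊕ ↥(Lᶜ)) (hw : w ∈ D') (x : ↥I'),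
        w = dMap L m x.1 → u ⟨w, hw⟩ = h x := by
      rintro (a | z) hw x hwx
      · by_cases hxL : (x : I) ∈ L
        · rw [dMap_pos L m hxL] at hwx
          cases hwx
          have := congrFun hgh ⟨x.1, hxL, x.2⟩
          simp only [Function.comp_apply, incl, m'] at this
          have hx' : (⟨x.1, x.2⟩ : ↥I') = x := rfl
          rw [hx'] at this
          exact this.symm
        · rw [dMap_neg L m hxL] at hwx; cases hwx
      · by_cases hxL : (x : I) ∈ L
        · rw [dMap_pos L m hxL] at hwx; cases hwx
        · rw [dMap_neg L m hxL] at hwx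
          cases hwx
          rfl
    refine ⟨u, ⟨?_, ?_⟩, ?_⟩
    · funext y; rfl
    · funext x
      exact key (dMap L m x.1) _ x rfl
    · rintro v ⟨hv1, hv2⟩
      funext w
      obtain ⟨w, hw⟩ := w
      rcases hw' : hw with (⟨a, ha, rfl⟩ | ⟨x, hx, rfl⟩)
      · have : v ⟨Sum.inl a, hw⟩ = v (s' ⟨a, ha⟩) := rfl
        rw [this]
        exact congrFun hv1 ⟨a, ha⟩
      · have : v ⟨dMap L m x, hw⟩ = v (d' ⟨x, hx⟩) := rfl
        rw [this]
        exact (congrFun hv2 ⟨x, hx⟩).trans (key _ _ ⟨x, hx⟩ rfl).symm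
end

section
/- Let I be a type, L ⊆ I a subset, S₀ a type, m : ↥L → S₀, and let D := S₀ ⊕ ↥(Lᶜ) with s : S₀ → D the left injection and d : I → D defined by d x = s (m ⟨x, h⟩) when h : x ∈ L and d x = Sum.inr ⟨x, h⟩ otherwise. Let n ≤ p be natural numbers, f : Fin (n+1) → Fin (p+1) strictly monotone with f 0 = 0, S : Fin (p+1) → Set S₀ with S 0 = Set.univ, and I' : Fin (n+1) → Set I with I' 0 = Set.univ, such that for every i ∈ Fin (n+1) and every x ∈ L: m x ∈ S (f i) if and only if x ∈ I' i. Define Dset : Fin (p+1) → Set D by Dset j := s '' (S j) ∪ d '' (I' i) when j = f i for some i, and Dset j := s '' (S j) otherwise. Then for all indices i ≤ j in Fin (p+1), s ⁻¹ (Dset j ∩ Dset i) = S j ∩ S i; that is, the family of restrictions of s constitutes a graph chain morphism (s, id) from the inclusion chain determined by S into the inclusion chain determined by Dset. -/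
/-- Pushout by extension: filling the gaps of the level-wise pushout chain with the
untouched levels of the source chain, the family of restrictions of `s := Sum.inl`
establishes a chain morphism `(s, id)`: for all `i ≤ j`,
`s ⁻¹' (Dset j ∩ Dset i) = S j ∩ S i`. -/
theorem stmt10 {I S₀ : Type*} (L : Set I) (m : L → S₀)
    (n p : ℕ) (hnp : n ≤ p)
    (f : Fin (n + 1) → Fin (p + 1)) (hf : StrictMono f) (hf0 : f 0 = 0)
    (S : Fin (p + 1) → Set S₀) (hS0 : S 0 = Set.univ)
    (I' : Fin (n + 1) → Set I) (hI0 : I' 0 = Set.univ)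
    (hcomp : ∀ (i : Fin (n + 1)) (x : L), m x ∈ S (f i) ↔ (x : I) ∈ I' i) :
    let Dset : Fin (p + 1) → Set (S₀ ⊕ ↥(Lᶜ)) := fun j =>
      @dite _ (∃ i, f i = j) (Classical.propDecidable _)
        (fun h => Sum.inl '' S j ∪ dMap L m '' I' h.choose)
        (fun _ => Sum.inl '' S j)
    ∀ i j : Fin (p + 1), i ≤ j →
      Sum.inl ⁻¹' (Dset j ∩ Dset i) = S j ∩ S i := by
  intro Dset
  have key : ∀ k, Sum.inl ⁻¹' (Dset k) = S k := by
    intro k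
    simp only [Dset]
    split
    · next h =>
      ext y
      constructor
      · rintro (⟨x, hx, hxe⟩ | ⟨x, hx, hxe⟩)
        · cases hxe; exact hx
        · unfold dMap at hxe
          split at hxe
          · next hxL =>
            cases hxe
            rw [← h.choose_spec]
            exact (hcomp h.choose ⟨x, hxL⟩).2 hx
          · simp at hxe
      · intro hy
        exact Or.inl ⟨y, hy, rfl⟩
    · ext y
      constructor
      · rintro ⟨x, hx, hxe⟩; cases hxe; exact hx
      · intro hy; exact ⟨y, hy, rfl⟩
  intro i j _
  rw [Set.preimage_inter, key, key]
end
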